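/- Let G be a group and let α₁, …, αₙ (n ≥ 1) be finitely many elements of ℂG. If the element ∑_{i=1}^n αᵢ*αᵢ is an analytical zero divisor, then every αᵢ is an analytical zero divisor. Moreover, if β ∈ ℓ²(G) satisfies (∑_{i=1}^n αᵢ*αᵢ)β = 0, then αᵢβ = 0 for every i. -/

import Mathlib

open scoped ENNReal

/-- The adjoint `α* = ∑ conj(a_g)·g⁻¹` of an element of the complex group algebra. -/
noncomputable def MonoidAlgebra.adj {G : Type*} [Group G] (α : MonoidAlgebra ℂ G) :
    MonoidAlgebra ℂ G :=
  MonoidAlgebra.ofCoeff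
    (Finsupp.mapRange (starRingEnd ℂ) (map_zero _) (Finsupp.equivMapDomain (Equiv.inv G) α.coeff))

/-- The product of `α ∈ ℂG` with `β ∈ ℓ²(G)`, defined pointwise by the finite sum
`(αβ)(x) = ∑_{g ∈ supp α} α(g)·β(g⁻¹x)`. -/
noncomputable def smulL2 {G : Type*} [Group G] (α : MonoidAlgebra ℂ G)
    (β : lp (fun _ : G => ℂ) 2) : G → ℂ :=
  fun x => ∑ g ∈ α.coeff.support, α.coeff g * β (g⁻¹ * x)

/-- `Υ(α) = a_1 − ∑_{g ≠ 1} |a_g|` (for self-adjoint `α`, `a_1` is real, so we take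
the real part). -/
noncomputable def Upsilon {G : Type*} [Group G] [DecidableEq G] (α : MonoidAlgebra ℂ G) : ℝ :=
  (α.coeff 1).re - ∑ g ∈ α.coeff.support.erase 1, ‖α.coeff g‖

/-- A self-adjoint element of `ℂG` is golden if `Υ(α) ≥ 0`. -/
def IsGolden {G : Type*} [Group G] [DecidableEq G] (α : MonoidAlgebra ℂ G) : Prop :=
  MonoidAlgebra.adj α = α ∧ 0 ≤ Upsilon α

lemma translate_memℓp {G : Type*} [Group G] (g : G) (f : lp (fun _ : G => ℝ) ∞) :
    Memℓp (fun x => f (g⁻¹ * x)) ∞ := by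
  have hf : Memℓp (fun x => f x) ∞ := f.2
  rw [memℓp_infty_iff] at hf ⊢
  obtain ⟨C, hC⟩ := hf
  exact ⟨C, by rintro y ⟨x, rfl⟩; exact hC ⟨g⁻¹ * x, rfl⟩⟩

/-- A group is amenable if there is a left-invariant mean on `ℓ∞(G, ℝ)`: a linear
functional `m` with `m 1 = 1`, `m f ≥ 0` whenever `f ≥ 0`, which is invariant under
left translation. -/
def IsAmenable (G : Type*) [Group G] : Prop :=
  ∃ m : lp (fun _ : G => ℝ) ∞ →ₗ[ℝ] ℝ,
    m 1 = 1 ∧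
    (∀ f : lp (fun _ : G => ℝ) ∞, (∀ x, 0 ≤ f x) → 0 ≤ m f) ∧
    ∀ (g : G) (f : lp (fun _ : G => ℝ) ∞),
      m ⟨fun x => f (g⁻¹ * x), translate_memℓp g f⟩ = m f

/-! Left translation makes `ℓ²(G)` a unitary representation of `G`, and hence an algebra
representation of `ℂG` in which `MonoidAlgebra.adj` acts as the Hilbert-space adjoint.
Therefore `⟪β, (∑ αᵢ*αᵢ) β⟫ = ∑ ‖αᵢ β‖²`, and if the left side vanishes so does every `αᵢ β`. -/

open scoped ComplexConjugate

theorem Memℓp.comp_equiv {ι κ E : Type*} [NormedAddCommGroup E] {p : ℝ≥0∞} {f : κ → E}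
    (hf : Memℓp f p) (e : ι ≃ κ) : Memℓp (f ∘ e) p := by
  rcases p.trichotomy with rfl | rfl | hp
  · rw [memℓp_zero_iff] at hf ⊢
    exact hf.preimage e.injective.injOn
  · rw [memℓp_infty_iff] at hf ⊢
    rwa [show (fun i => ‖(f ∘ e) i‖) = (fun j => ‖f j‖) ∘ e from rfl, e.surjective.range_comp]
  · rw [memℓp_gen_iff hp] at hf ⊢
    exact e.summable_iff.2 hf

section LeftRegular

variable {G : Type*} [Group G]

local notation "ℓ²" => lp (fun _ : G => ℂ) 2

noncomputable def leftRegularL2 : Representation ℂ G ℓ² where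
  toFun g :=
    { toFun β := ⟨fun x => β (g⁻¹ * x), Memℓp.comp_equiv (lp.memℓp β) (Equiv.mulLeft g⁻¹)⟩
      map_add' _ _ := rfl
      map_smul' _ _ := rfl }
  map_one' := by ext; simp
  map_mul' g h := by ext β x; exact congrArg β (by group)

@[simp] theorem leftRegularL2_apply (g : G) (β : ℓ²) (x : G) :
    leftRegularL2 g β x = β (g⁻¹ * x) := rfl

theorem inner_leftRegularL2 (g : G) (β u : ℓ²) :
    inner ℂ (leftRegularL2 g β) u = inner ℂ β (leftRegularL2 g⁻¹ u) := by
  simp only [lp.inner_eq_tsum, leftRegularL2_apply, inv_inv]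
  exact ((Equiv.mulLeft g).tsum_eq fun x => inner ℂ (β (g⁻¹ * x)) (u x)).symm.trans
    (tsum_congr fun y => by simp)

theorem coe_asAlgebraHom_leftRegularL2 (α : MonoidAlgebra ℂ G) (β : ℓ²) :
    ⇑(leftRegularL2.asAlgebraHom α β) = smulL2 α β := by
  ext x
  simp only [Representation.asAlgebraHom_def, MonoidAlgebra.lift_apply, Finsupp.sum,
    LinearMap.sum_apply, LinearMap.smul_apply, lp.coeFn_sum, Finset.sum_apply, lp.coeFn_smul,
    Pi.smul_apply, leftRegularL2_apply, smul_eq_mul, smulL2]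

theorem MonoidAlgebra.adj_coeff (α : MonoidAlgebra ℂ G) (g : G) :
    (MonoidAlgebra.adj α).coeff g = conj (α.coeff g⁻¹) := by
  simp [MonoidAlgebra.adj, Finsupp.equivMapDomain_apply]

theorem MonoidAlgebra.adj_add (α γ : MonoidAlgebra ℂ G) :
    MonoidAlgebra.adj (α + γ) = MonoidAlgebra.adj α + MonoidAlgebra.adj γ := by
  ext g
  simp [MonoidAlgebra.adj_coeff]

theorem MonoidAlgebra.adj_single (g : G) (c : ℂ) :
    MonoidAlgebra.adj (MonoidAlgebra.single g c) = MonoidAlgebra.single g⁻¹ (conj c) := by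
  ext h
  classical
  simp only [MonoidAlgebra.adj_coeff, MonoidAlgebra.coeff_single, Finsupp.single_apply,
    inv_eq_iff_eq_inv, apply_ite conj, map_zero]

theorem inner_asAlgebraHom_leftRegularL2_adj (α : MonoidAlgebra ℂ G) (β u : ℓ²) :
    inner ℂ β (leftRegularL2.asAlgebraHom (MonoidAlgebra.adj α) u)
      = inner ℂ (leftRegularL2.asAlgebraHom α β) u := by
  induction α using MonoidAlgebra.induction_linear with
  | zero => simp [MonoidAlgebra.adj]
  | add α γ hα hγ => simp [MonoidAlgebra.adj_add, hα, hγ]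
  | single g c =>
    simp [MonoidAlgebra.adj_single, Representation.asAlgebraHom_single,
      inner_leftRegularL2, mul_comm]

theorem inner_asAlgebraHom_leftRegularL2_sum_adj_mul_self {ι : Type*} (s : Finset ι)
    (α : ι → MonoidAlgebra ℂ G) (β : ℓ²) :
    inner ℂ β (leftRegularL2.asAlgebraHom (∑ i ∈ s, MonoidAlgebra.adj (α i) * α i) β)
      = ((∑ i ∈ s, ‖leftRegularL2.asAlgebraHom (α i) β‖ ^ 2 : ℝ) : ℂ) := by
  simp only [map_sum, map_mul, LinearMap.sum_apply, Module.End.mul_apply, inner_sum,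
    inner_asAlgebraHom_leftRegularL2_adj, inner_self_eq_norm_sq_to_K,
    RCLike.ofReal_eq_complex_ofReal, Complex.ofReal_sum, Complex.ofReal_pow]

theorem asAlgebraHom_leftRegularL2_eq_zero_of_sum_adj_mul_self {ι : Type*} {s : Finset ι}
    {α : ι → MonoidAlgebra ℂ G} {β : ℓ²}
    (h : leftRegularL2.asAlgebraHom (∑ i ∈ s, MonoidAlgebra.adj (α i) * α i) β = 0)
    {i : ι} (hi : i ∈ s) : leftRegularL2.asAlgebraHom (α i) β = 0 := by
  have hsum := inner_asAlgebraHom_leftRegularL2_sum_adj_mul_self s α β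
  rw [h, inner_zero_right] at hsum
  have hnorms : ∑ j ∈ s, ‖leftRegularL2.asAlgebraHom (α j) β‖ ^ 2 = 0 := by
    exact_mod_cast hsum.symm
  rw [Finset.sum_eq_zero_iff_of_nonneg fun j _ => sq_nonneg _] at hnorms
  simpa using hnorms i hi

end LeftRegular

theorem stmt_8_general {G : Type*} [Group G] (n : ℕ)
    (α : Fin n → MonoidAlgebra ℂ G) :
    (∀ β : lp (fun _ : G => ℂ) 2,
        smulL2 (∑ i, MonoidAlgebra.adj (α i) * α i) β = 0 → ∀ i, smulL2 (α i) β = 0) ∧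
      ((∃ β : lp (fun _ : G => ℂ) 2, β ≠ 0 ∧
          smulL2 (∑ i, MonoidAlgebra.adj (α i) * α i) β = 0) →
        ∀ i, ∃ β : lp (fun _ : G => ℂ) 2, β ≠ 0 ∧ smulL2 (α i) β = 0) := by
  have annihilates : ∀ β : lp (fun _ : G => ℂ) 2,
      smulL2 (∑ i, MonoidAlgebra.adj (α i) * α i) β = 0 → ∀ i, smulL2 (α i) β = 0 := by
    intro β hβ i
    rw [← coe_asAlgebraHom_leftRegularL2, ← lp.eq_zero_iff_coeFn_eq_zero] at hβ ⊢
    exact asAlgebraHom_leftRegularL2_eq_zero_of_sum_adj_mul_self hβ (Finset.mem_univ i)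
  exact ⟨annihilates, fun ⟨β, hβ, h⟩ i => ⟨β, hβ, annihilates β h i⟩⟩

/-- If `∑ αᵢ*αᵢ` is an analytical zero divisor then each `αᵢ` is; moreover any
`β ∈ ℓ²(G)` killed by `∑ αᵢ*αᵢ` is killed by each `αᵢ`. -/
theorem stmt_8 {G : Type*} [Group G] (n : ℕ) (hn : 1 ≤ n)
    (α : Fin n → MonoidAlgebra ℂ G) :
    (∀ β : lp (fun _ : G => ℂ) 2,
        smulL2 (∑ i, MonoidAlgebra.adj (α i) * α i) β = 0 → ∀ i, smulL2 (α i) β = 0) ∧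
      ((∃ β : lp (fun _ : G => ℂ) 2, β ≠ 0 ∧
          smulL2 (∑ i, MonoidAlgebra.adj (α i) * α i) β = 0) →
        ∀ i, ∃ β : lp (fun _ : G => ℂ) 2, β ≠ 0 ∧ smulL2 (α i) β = 0) :=
  stmt_8_general n α
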